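/- Let q be a real number with 0 < q < 1, let k ≥ 1 and n ≥ 1 be natural numbers, and let θ_1, …, θ_k be positive real numbers. Then the negative q-multinomial distribution of the first kind with parameters n, (θ_1,…,θ_k), q is a probability distribution: the family indexed by tuples (t_1,…,t_k) ∈ ℕ^k of terms C_q(n + s_k − 1; t_1,…,t_k) · ∏_{j=1}^{k} [ θ_j^{t_j} · q^{t_j(t_j−1)/2} / ∏_{i=1}^{n + s_k − s_{j−1}} (1 + θ_j q^{i−1}) ] is summable with sum equal to 1; here s_j = t_1 + ⋯ + t_j with s_0 = 0 and s_k = t_1 + ⋯ + t_k. -/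

import Mathlib

/-!
Splitting off the first coordinate, the summand factors as a one-dimensional negative
`q`-binomial term in `t₁`, with `n` replaced by `n + t₂ + ⋯ + tₖ`, times the summand for
`(θ₂, …, θₖ)`; summing nonnegative terms fibrewise reduces everything to `k = 1`.

For `k = 1` the engine is Rothe's identity
`∏_{i<N} (1 + θ qⁱ) = ∑_{s ≤ N} [N choose s]_q θˢ q^(s choose 2)`, proved with `q`-Pascal.
The same recursion shows that the partial sum up to `M` is the first `M + 1` Rothe terms
for `N = n + M` divided by `∏_{i<n+M} (1 + θ qⁱ)`. The `n` missing terms have `s > M` and are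
at most `((1 - q)⁻¹ θ)ˢ q^(s choose 2)`, which tends to `0`.
-/

open Filter Finset Topology

noncomputable def qNum (q : ℝ) (m : ℤ) : ℝ := (1 - q ^ m) / (1 - q)

noncomputable def qFactorial (q : ℝ) (n : ℕ) : ℝ :=
  ∏ i ∈ Finset.range n, qNum q ((i : ℤ) + 1)

noncomputable def qFacOrd (q : ℝ) (x : ℤ) (r : ℕ) : ℝ :=
  ∏ i ∈ Finset.range r, qNum q (x - (i : ℤ))

noncomputable def qMultinomial (q : ℝ) (x : ℤ) {k : ℕ} (r : Fin k → ℕ) : ℝ :=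
  qFacOrd q x (∑ j, r j) / ∏ j, qFactorial q (r j)

lemma hasSum_of_hasSum_fin_cons {β : Type*} {k : ℕ} {f : (Fin (k + 1) → β) → ℝ} (hf : 0 ≤ f)
    {g : (Fin k → β) → ℝ} {a : ℝ} (hfib : ∀ t, HasSum (fun b => f (Fin.cons b t)) (g t))
    (hg : HasSum g a) : HasSum f a := by
  let e : (Fin k → β) × β ≃ (Fin (k + 1) → β) :=
    (Equiv.prodComm _ _).trans (Fin.consEquiv fun _ => β)
  rw [← e.hasSum_iff]
  have hfib' : ∀ t, HasSum (fun b => (f ∘ e) (t, b)) (g t) := hfib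
  have hsum : Summable (f ∘ e) := (summable_prod_of_nonneg fun _ => hf _).2
    ⟨fun t => (hfib' t).summable, hg.summable.congr fun t => (hfib' t).tsum_eq.symm⟩
  exact (hsum.hasSum.prod_fiberwise hfib').unique hg ▸ hsum.hasSum

section QNumbers

variable {q : ℝ}

lemma qNum_natCast (hq : q ≠ 1) (m : ℕ) : qNum q m = ∑ i ∈ range m, q ^ i := by
  rw [qNum, geom_sum_eq hq, zpow_natCast, ← neg_sub, ← neg_sub q, neg_div_neg_eq]

lemma qNum_natCast_add (a b : ℕ) : qNum q ((a + b : ℕ) : ℤ) = qNum q a + q ^ a * qNum q b := by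
  simp only [qNum, zpow_natCast, ← mul_div_assoc, ← add_div, pow_add]
  ring

lemma qNum_zero : qNum q 0 = 0 := by simp [qNum]

lemma qNum_nonneg (hq0 : 0 ≤ q) (hq : q ≠ 1) {m : ℤ} (hm : 0 ≤ m) : 0 ≤ qNum q m := by
  lift m to ℕ using hm
  rw [qNum_natCast hq]
  positivity

lemma one_le_qNum (hq0 : 0 ≤ q) (hq : q ≠ 1) {m : ℕ} (hm : 1 ≤ m) : 1 ≤ qNum q m := by
  obtain ⟨m, rfl⟩ := Nat.exists_eq_add_of_le' hm
  rw [qNum_natCast hq, sum_range_succ']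
  simp only [pow_zero, le_add_iff_nonneg_left]
  positivity

lemma qNum_le_inv_one_sub (hq0 : 0 ≤ q) (hq1 : q < 1) (m : ℤ) : qNum q m ≤ (1 - q)⁻¹ := by
  rw [qNum, div_eq_mul_inv]
  exact mul_le_of_le_one_left (inv_nonneg.2 (sub_nonneg.2 hq1.le))
    (sub_le_self _ (zpow_nonneg hq0 m))

lemma one_le_qFactorial (hq0 : 0 ≤ q) (hq : q ≠ 1) (n : ℕ) : 1 ≤ qFactorial q n :=
  one_le_prod fun i _ => mod_cast one_le_qNum hq0 hq (Nat.le_add_left 1 i)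

lemma qFactorial_pos (hq0 : 0 ≤ q) (hq : q ≠ 1) (n : ℕ) : 0 < qFactorial q n :=
  zero_lt_one.trans_le (one_le_qFactorial hq0 hq n)

lemma qFactorial_succ (n : ℕ) : qFactorial q (n + 1) = qFactorial q n * qNum q (n + 1) :=
  prod_range_succ _ _

lemma qFacOrd_zero (x : ℤ) : qFacOrd q x 0 = 1 := prod_range_zero _

lemma qFacOrd_succ (x : ℤ) (s : ℕ) : qFacOrd q x (s + 1) = qFacOrd q x s * qNum q (x - s) :=
  prod_range_succ _ _

lemma qFacOrd_succ_succ (x : ℤ) (s : ℕ) :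
    qFacOrd q (x + 1) (s + 1) = qNum q (x + 1) * qFacOrd q x s := by
  rw [qFacOrd, prod_range_succ', qFacOrd, mul_comm]
  simp only [Nat.cast_add, Nat.cast_one, CharP.cast_eq_zero, sub_zero, add_sub_add_right_eq_sub]

lemma qFacOrd_add (x : ℤ) (r s : ℕ) :
    qFacOrd q x (r + s) = qFacOrd q x r * qFacOrd q (x - r) s := by
  rw [qFacOrd, qFacOrd, qFacOrd, prod_range_add]
  congr 1
  refine prod_congr rfl fun i _ => ?_
  push_cast
  ring_nf

lemma qFacOrd_natCast_eq_zero {N s : ℕ} (h : N < s) : qFacOrd q N s = 0 :=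
  prod_eq_zero (mem_range.2 h) (by rw [sub_self, qNum_zero])

lemma qFacOrd_nonneg (hq0 : 0 ≤ q) (hq : q ≠ 1) {x : ℤ} {s : ℕ} (h : (s : ℤ) ≤ x + 1) :
    0 ≤ qFacOrd q x s :=
  prod_nonneg fun i hi => qNum_nonneg hq0 hq (by simp only [mem_range] at hi; omega)

lemma qFacOrd_le (hq0 : 0 ≤ q) (hq1 : q < 1) {x : ℤ} {s : ℕ} (h : (s : ℤ) ≤ x + 1) :
    qFacOrd q x s ≤ (1 - q)⁻¹ ^ s := by
  calc qFacOrd q x s ≤ ∏ _i ∈ range s, (1 - q)⁻¹ :=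
        prod_le_prod (fun i hi => qNum_nonneg hq0 hq1.ne (by simp only [mem_range] at hi; omega))
          fun i _ => qNum_le_inv_one_sub hq0 hq1 _
    _ = (1 - q)⁻¹ ^ s := by rw [prod_const, card_range]

noncomputable def qChoose (q : ℝ) (x : ℤ) (s : ℕ) : ℝ := qFacOrd q x s / qFactorial q s

lemma qChoose_zero_right (x : ℤ) : qChoose q x 0 = 1 := by
  simp [qChoose, qFacOrd_zero, qFactorial]

lemma qChoose_natCast_eq_zero {N s : ℕ} (h : N < s) : qChoose q N s = 0 := by
  rw [qChoose, qFacOrd_natCast_eq_zero h, zero_div]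

lemma qChoose_nonneg (hq0 : 0 ≤ q) (hq : q ≠ 1) {x : ℤ} {s : ℕ} (h : (s : ℤ) ≤ x + 1) :
    0 ≤ qChoose q x s :=
  div_nonneg (qFacOrd_nonneg hq0 hq h) (qFactorial_pos hq0 hq s).le

lemma qChoose_le (hq0 : 0 ≤ q) (hq1 : q < 1) {x : ℤ} {s : ℕ} (h : (s : ℤ) ≤ x + 1) :
    qChoose q x s ≤ (1 - q)⁻¹ ^ s :=
  (div_le_self (qFacOrd_nonneg hq0 hq1.ne h) (one_le_qFactorial hq0 hq1.ne s)).trans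
    (qFacOrd_le hq0 hq1 h)

lemma qChoose_succ_succ (hq0 : 0 ≤ q) (hq : q ≠ 1) {N s : ℕ} (hs : s ≤ N) :
    qChoose q (N + 1) (s + 1) = qChoose q N (s + 1) + q ^ (N - s) * qChoose q N s := by
  have hNs : qNum q (N + 1) = qNum q (N - s : ℕ) + q ^ (N - s) * qNum q (s + 1) := by
    rw [show (N : ℤ) + 1 = ((N - s + (s + 1) : ℕ) : ℤ) by omega, qNum_natCast_add]
    push_cast
    rfl
  have hfac := (qFactorial_pos hq0 hq s).ne'
  have hnum : qNum q (s + 1) ≠ 0 :=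
    (zero_lt_one.trans_le (mod_cast one_le_qNum hq0 hq (Nat.le_add_left 1 s))).ne'
  rw [qChoose, qChoose, qChoose, qFacOrd_succ_succ, qFacOrd_succ, qFactorial_succ, hNs,
    Nat.cast_sub hs]
  field_simp

end QNumbers

section Rothe

variable (q θ : ℝ)

noncomputable def rotheTerm (x : ℤ) (s : ℕ) : ℝ := qChoose q x s * θ ^ s * q ^ s.choose 2

noncomputable def negQPochhammer (N : ℕ) : ℝ := ∏ i ∈ range N, (1 + θ * q ^ i)

variable {q θ}

lemma negQPochhammer_succ (N : ℕ) :
    negQPochhammer q θ (N + 1) = negQPochhammer q θ N * (1 + θ * q ^ N) :=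
  prod_range_succ _ _

lemma rotheTerm_zero_right (x : ℤ) : rotheTerm q θ x 0 = 1 := by
  simp [rotheTerm, qChoose_zero_right]

lemma rotheTerm_natCast_eq_zero {N s : ℕ} (h : N < s) : rotheTerm q θ N s = 0 := by
  rw [rotheTerm, qChoose_natCast_eq_zero h, zero_mul, zero_mul]

lemma rotheTerm_succ_succ (hq0 : 0 ≤ q) (hq : q ≠ 1) {N s : ℕ} (hs : s ≤ N) :
    rotheTerm q θ ↑(N + 1) (s + 1) = rotheTerm q θ N (s + 1) + θ * q ^ N * rotheTerm q θ N s := by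
  have hpow : q ^ (N - s) * q ^ (s + 1).choose 2 = q ^ N * q ^ s.choose 2 := by
    rw [Nat.choose_succ_succ', Nat.choose_one_right, ← pow_add, ← pow_add, ← add_assoc,
      Nat.sub_add_cancel hs]
  simp only [rotheTerm, Nat.cast_succ]
  rw [qChoose_succ_succ hq0 hq hs]
  linear_combination qChoose q N s * θ ^ (s + 1) * hpow

lemma sum_range_rotheTerm_succ (hq0 : 0 ≤ q) (hq : q ≠ 1) {m N : ℕ} (hm : m ≤ N) :
    ∑ s ∈ range (m + 2), rotheTerm q θ ↑(N + 1) s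
      = (1 + θ * q ^ N) * ∑ s ∈ range (m + 1), rotheTerm q θ N s + rotheTerm q θ N (m + 1) := by
  have hstep : ∑ s ∈ range (m + 1), rotheTerm q θ ↑(N + 1) (s + 1)
      = ∑ s ∈ range (m + 1), rotheTerm q θ N (s + 1)
        + θ * q ^ N * ∑ s ∈ range (m + 1), rotheTerm q θ N s := by
    rw [mul_sum, ← sum_add_distrib]
    exact sum_congr rfl fun s hs =>
      rotheTerm_succ_succ hq0 hq (by simp only [mem_range] at hs; omega)
  have hsplit := (sum_range_succ' (rotheTerm q θ N) (m + 1)).symm.trans (sum_range_succ _ _)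
  rw [sum_range_succ', hstep, rotheTerm_zero_right]
  rw [rotheTerm_zero_right] at hsplit
  linear_combination hsplit

theorem sum_range_rotheTerm (hq0 : 0 ≤ q) (hq : q ≠ 1) (N : ℕ) :
    ∑ s ∈ range (N + 1), rotheTerm q θ N s = negQPochhammer q θ N := by
  induction N with
  | zero => simp [rotheTerm_zero_right, negQPochhammer]
  | succ N ih =>
    rw [sum_range_rotheTerm_succ hq0 hq le_rfl, ih, rotheTerm_natCast_eq_zero (Nat.lt_succ_self N),
      negQPochhammer_succ]
    ring

end Rothe

section NegQBinomial

variable {q θ : ℝ}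

lemma one_le_negQPochhammer (hq0 : 0 ≤ q) (hθ : 0 ≤ θ) (N : ℕ) : 1 ≤ negQPochhammer q θ N :=
  one_le_prod fun i _ => le_add_of_nonneg_right (by positivity)

lemma negQPochhammer_pos (hq0 : 0 ≤ q) (hθ : 0 ≤ θ) (N : ℕ) : 0 < negQPochhammer q θ N :=
  zero_lt_one.trans_le (one_le_negQPochhammer hq0 hθ N)

lemma rotheTerm_nonneg (hq0 : 0 ≤ q) (hq : q ≠ 1) (hθ : 0 ≤ θ) {x : ℤ} {s : ℕ}
    (h : (s : ℤ) ≤ x + 1) : 0 ≤ rotheTerm q θ x s := by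
  have := qChoose_nonneg hq0 hq h
  unfold rotheTerm
  positivity

lemma rotheTerm_le (hq0 : 0 ≤ q) (hq1 : q < 1) (hθ : 0 ≤ θ) {x : ℤ} {s : ℕ}
    (h : (s : ℤ) ≤ x + 1) : rotheTerm q θ x s ≤ ((1 - q)⁻¹ * θ) ^ s * q ^ s.choose 2 := by
  rw [rotheTerm, mul_pow]
  gcongr
  exact qChoose_le hq0 hq1 h

lemma tendsto_pow_mul_pow_choose_two (hq0 : 0 ≤ q) (hq1 : q < 1) (c : ℝ) :
    Tendsto (fun s : ℕ => c ^ s * q ^ s.choose 2) atTop (𝓝 0) := by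
  refine (summable_of_ratio_norm_eventually_le (r := 1 / 2) (by norm_num) ?_).tendsto_atTop_zero
  have hsmall : ∀ᶠ s : ℕ in atTop, ‖c‖ * q ^ s ≤ 1 / 2 :=
    ((tendsto_pow_atTop_nhds_zero_of_lt_one hq0 hq1).const_mul ‖c‖).eventually
      (eventually_le_nhds (by norm_num : (‖c‖ * 0 : ℝ) < 1 / 2))
  filter_upwards [hsmall] with s hs
  have hstep : c ^ (s + 1) * q ^ (s + 1).choose 2 = (c ^ s * q ^ s.choose 2) * (c * q ^ s) := by
    rw [Nat.choose_succ_succ', Nat.choose_one_right, pow_succ, pow_add]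
    ring
  rw [hstep, norm_mul _ (c * q ^ s), norm_mul c, Real.norm_of_nonneg (pow_nonneg hq0 s),
    mul_comm (1 / 2)]
  exact mul_le_mul_of_nonneg_left hs (norm_nonneg _)

variable (q θ)

noncomputable def negQBinomialTerm (n t : ℕ) : ℝ :=
  rotheTerm q θ ((n : ℤ) + t - 1) t / negQPochhammer q θ (n + t)

variable {q θ}

lemma negQBinomialTerm_nonneg (hq0 : 0 ≤ q) (hq : q ≠ 1) (hθ : 0 ≤ θ) (n t : ℕ) :
    0 ≤ negQBinomialTerm q θ n t :=
  div_nonneg (rotheTerm_nonneg hq0 hq hθ (by omega))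
    (negQPochhammer_pos hq0 hθ _).le

lemma sum_range_negQBinomialTerm (hq0 : 0 ≤ q) (hq : q ≠ 1) (hθ : 0 ≤ θ) (n M : ℕ) :
    ∑ t ∈ range (M + 1), negQBinomialTerm q θ n t
      = (∑ s ∈ range (M + 1), rotheTerm q θ ↑(n + M) s) / negQPochhammer q θ (n + M) := by
  induction M with
  | zero => simp [negQBinomialTerm, rotheTerm_zero_right]
  | succ M ih =>
    have hP := (negQPochhammer_pos hq0 hθ (n + M)).ne'
    have hlast : (1 + θ * q ^ (n + M)) ≠ 0 := by positivity
    rw [sum_range_succ, ih, ← add_assoc n M 1, sum_range_rotheTerm_succ hq0 hq (by omega),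
      negQBinomialTerm, ← add_assoc n M 1, negQPochhammer_succ,
      show (n : ℤ) + ↑(M + 1) - 1 = ↑(n + M) by push_cast; ring]
    field_simp

lemma one_sub_sum_range_negQBinomialTerm (hq0 : 0 ≤ q) (hq : q ≠ 1) (hθ : 0 ≤ θ) (n M : ℕ) :
    1 - ∑ t ∈ range (M + 1), negQBinomialTerm q θ n t
      = (∑ i ∈ range n, rotheTerm q θ ↑(n + M) (M + 1 + i)) / negQPochhammer q θ (n + M) := by
  have hP := (negQPochhammer_pos hq0 hθ (n + M)).ne'
  rw [sum_range_negQBinomialTerm hq0 hq hθ, ← div_self hP, ← sub_div,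
    ← sum_range_rotheTerm hq0 hq, show n + M + 1 = M + 1 + n by ring, sum_range_add,
    add_sub_cancel_left]

theorem hasSum_negQBinomialTerm (hq0 : 0 ≤ q) (hq1 : q < 1) (hθ : 0 ≤ θ) (n : ℕ) :
    HasSum (negQBinomialTerm q θ n) 1 := by
  set c : ℕ → ℝ := fun s => ((1 - q)⁻¹ * θ) ^ s * q ^ s.choose 2
  have htail : Tendsto (fun M => ∑ i ∈ range n, c (M + 1 + i)) atTop (𝓝 0) := by
    have hc : Tendsto c atTop (𝓝 0) := tendsto_pow_mul_pow_choose_two hq0 hq1 _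
    have h := tendsto_finsetSum (range n) fun i _ => hc.comp (tendsto_add_atTop_nat (1 + i))
    rw [sum_const_zero] at h
    exact h.congr fun M => sum_congr rfl fun i _ => by rw [Function.comp_apply, add_assoc]
  have hbounds (M : ℕ) : 0 ≤ 1 - ∑ t ∈ range (M + 1), negQBinomialTerm q θ n t ∧
      1 - ∑ t ∈ range (M + 1), negQBinomialTerm q θ n t ≤ ∑ i ∈ range n, c (M + 1 + i) := by
    have hT : ∀ i ∈ range n, (↑(M + 1 + i) : ℤ) ≤ ↑(n + M) + 1 := fun i hi => by
      simp only [mem_range] at hi; omega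
    have hsum := sum_nonneg fun i hi => rotheTerm_nonneg (θ := θ) hq0 hq1.ne hθ (hT i hi)
    rw [one_sub_sum_range_negQBinomialTerm hq0 hq1.ne hθ]
    exact ⟨div_nonneg hsum (negQPochhammer_pos hq0 hθ _).le,
      (div_le_self hsum (one_le_negQPochhammer hq0 hθ _)).trans
        (sum_le_sum fun i hi => rotheTerm_le hq0 hq1 hθ (hT i hi))⟩
  have hrest := squeeze_zero (fun M => (hbounds M).1) (fun M => (hbounds M).2) htail
  rw [hasSum_iff_tendsto_nat_of_nonneg (negQBinomialTerm_nonneg hq0 hq1.ne hθ n),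
    ← tendsto_add_atTop_iff_nat 1]
  simpa using (tendsto_const_nhds (x := (1 : ℝ))).sub hrest

end NegQBinomial

section NegQMultinomial

variable {q : ℝ} {k : ℕ}

lemma qMultinomial_cons (x : ℤ) (a : ℕ) (t : Fin k → ℕ) :
    qMultinomial q x (Fin.cons a t : Fin (k + 1) → ℕ)
      = qChoose q x a * qMultinomial q (x - a) t := by
  rw [qMultinomial, qMultinomial, qChoose, Fin.sum_cons, qFacOrd_add, Fin.prod_univ_succ]
  simp only [Fin.cons_zero, Fin.cons_succ]
  exact mul_div_mul_comm _ _ _ _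

lemma sum_filter_lt_succ_cons (a : ℕ) (t : Fin k → ℕ) (j : Fin k) :
    ∑ i ∈ univ.filter (· < j.succ), (Fin.cons a t : Fin (k + 1) → ℕ) i
      = a + ∑ i ∈ univ.filter (· < j), t i := by
  simp [sum_filter, Fin.sum_univ_succ, Fin.succ_lt_succ_iff]

variable (q) in
noncomputable def negQMultinomialTerm (n : ℕ) (θ : Fin k → ℝ) (t : Fin k → ℕ) : ℝ :=
  qMultinomial q ((n : ℤ) + (∑ i, t i) - 1) t *
    ∏ j : Fin k,
      θ j ^ t j * q ^ (t j * (t j - 1) / 2) /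
        ∏ i ∈ Finset.range
            (n + (∑ i', t i') - ∑ i' ∈ Finset.univ.filter (fun i' => i' < j), t i'),
          (1 + θ j * q ^ i)

lemma negQMultinomialTerm_cons (n : ℕ) (θ : Fin (k + 1) → ℝ) (a : ℕ) (t : Fin k → ℕ) :
    negQMultinomialTerm q n θ (Fin.cons a t)
      = negQBinomialTerm q (θ 0) (n + ∑ i, t i) a * negQMultinomialTerm q n (Fin.tail θ) t := by
  set s := ∑ i, t i
  rw [negQMultinomialTerm, negQMultinomialTerm, negQBinomialTerm, rotheTerm, Fin.sum_cons,
    qMultinomial_cons, Fin.prod_univ_succ]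
  simp only [Fin.cons_zero, Fin.cons_succ, sum_filter_lt_succ_cons, Fin.not_lt_zero, filter_false,
    sum_empty, Nat.choose_two_right, Fin.tail, Nat.sub_zero, Nat.add_sub_add_left,
    add_left_comm n a]
  rw [show (n : ℤ) + ↑(a + s) - 1 = ↑(n + s) + a - 1 by push_cast; ring,
    show (n + s : ℕ) + (a : ℤ) - 1 - a = n + ↑s - 1 by push_cast; ring,
    negQPochhammer, add_comm a]
  ring

lemma negQMultinomialTerm_nonneg (hq0 : 0 ≤ q) (hq : q ≠ 1) (n : ℕ) {θ : Fin k → ℝ}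
    (hθ : ∀ j, 0 ≤ θ j) (t : Fin k → ℕ) : 0 ≤ negQMultinomialTerm q n θ t := by
  refine mul_nonneg (div_nonneg (qFacOrd_nonneg hq0 hq (by omega))
    (prod_nonneg fun j _ => (qFactorial_pos hq0 hq _).le))
    (prod_nonneg fun j _ => div_nonneg ?_ (negQPochhammer_pos hq0 (hθ j) _).le)
  have := hθ j
  positivity

theorem hasSum_negQMultinomialTerm (hq0 : 0 ≤ q) (hq1 : q < 1) (n : ℕ) (θ : Fin k → ℝ)
    (hθ : ∀ j, 0 ≤ θ j) : HasSum (negQMultinomialTerm q n θ) 1 := by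
  induction k with
  | zero =>
    convert hasSum_fintype (negQMultinomialTerm q n θ)
    simp [negQMultinomialTerm, qMultinomial, qFacOrd_zero, qFactorial]
  | succ k ih =>
    refine hasSum_of_hasSum_fin_cons (negQMultinomialTerm_nonneg hq0 hq1.ne n hθ) (fun t => ?_)
      (ih (Fin.tail θ) fun j => hθ j.succ)
    simp_rw [negQMultinomialTerm_cons]
    simpa using (hasSum_negQBinomialTerm hq0 hq1 (hθ 0) _).mul_right _

end NegQMultinomial

theorem neg_qMultinomial_dist_first_kind_general (q : ℝ) (hq0 : 0 < q) (hq1 : q < 1)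
    (k n : ℕ) (θ : Fin k → ℝ) (hθ : ∀ j, 0 < θ j) :
    HasSum
      (fun t : Fin k → ℕ =>
        qMultinomial q ((n : ℤ) + (∑ i, t i) - 1) t *
          ∏ j : Fin k,
            θ j ^ t j * q ^ (t j * (t j - 1) / 2) /
              ∏ i ∈ Finset.range
                  (n + (∑ i', t i') - ∑ i' ∈ Finset.univ.filter (fun i' => i' < j), t i'),
                (1 + θ j * q ^ i))
      1 :=
  hasSum_negQMultinomialTerm hq0.le hq1 n θ fun j => (hθ j).le

/-- The negative q-multinomial distribution of the first kind is a probability distribution: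
    the family over (t_1,…,t_k) ∈ ℕ^k of terms
    C_q(n+s_k−1; t) ∏_j θ_j^(t_j) q^(t_j(t_j−1)/2) / ∏_{i=1}^{n+s_k−s_{j−1}} (1 + θ_j q^(i−1))
    sums to 1. -/
theorem neg_qMultinomial_dist_first_kind (q : ℝ) (hq0 : 0 < q) (hq1 : q < 1)
    (k n : ℕ) (hk : 1 ≤ k) (hn : 1 ≤ n) (θ : Fin k → ℝ) (hθ : ∀ j, 0 < θ j) :
    HasSum
      (fun t : Fin k → ℕ =>
        qMultinomial q ((n : ℤ) + (∑ i, t i) - 1) t *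
          ∏ j : Fin k,
            θ j ^ t j * q ^ (t j * (t j - 1) / 2) /
              ∏ i ∈ Finset.range
                  (n + (∑ i', t i') - ∑ i' ∈ Finset.univ.filter (fun i' => i' < j), t i'),
                (1 + θ j * q ^ i))
      1 :=
  neg_qMultinomial_dist_first_kind_general q hq0 hq1 k n θ hθ
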